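/- arXiv:2603.13407 — 2 statements merged into one kernel-verified Lean document; each statement's English description precedes it below -/
import Mathlib

section
/- Let (P,Q) be a pair of probability measures on a measurable space X and (P',Q') a pair of probability measures on a measurable space X'. Suppose there exist Markov kernels K: X → X' and L: X' → X with PK = P', QK = Q', P'L = P, and Q'L = Q. Then for every ε ≥ 0, δ_{Q‖P}(ε) = δ_{Q'‖P'}(ε). -/
/-!
Both inequalities are the data-processing inequality `δ_{QL‖PL}(ε) ≤ δ_{Q‖P}(ε)`. For a
measurable `A`, the function `g = L(·, A)` takes values in `[0, 1]`, so by the layer-cake formula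
`∫ g dμ` is the integral over `t ∈ (0, 1]` of `μ {g > t}`. Integrating the bound
`Q {g > t} ≤ δ + e^ε P {g > t}` over that unit interval gives `QL(A) ≤ δ + e^ε PL(A)`.
-/

open MeasureTheory ProbabilityTheory

/-- The privacy curve of the binary experiment `(P,Q)`:
`δ_{Q‖P}(ε) = sup_{A measurable} (Q(A) − e^ε P(A))`. -/
noncomputable def privCurve {X : Type*} [MeasurableSpace X] (P Q : Measure X) (ε : ℝ) : ℝ :=
  ⨆ A : {A : Set X // MeasurableSet A}, ((Q A.1).toReal - Real.exp ε * (P A.1).toReal)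

open Set ENNReal

section LayerCake

variable {α : Type*} [MeasurableSpace α] {g : α → ℝ≥0∞}

lemma lintegral_eq_setLIntegral_Ioc_meas_lt (μ : Measure α) (hg : Measurable g)
    (hg_le : ∀ x, g x ≤ 1) :
    ∫⁻ x, g x ∂μ = ∫⁻ t in Ioc (0 : ℝ) 1, μ {x | t < (g x).toReal} := by
  have hg_top : ∀ x, g x ≠ ∞ := fun x => ne_top_of_le_ne_top one_ne_top (hg_le x)
  have h_empty : ∀ t ∈ Ioi (1 : ℝ), μ {x | t < (g x).toReal} = 0 := fun t ht => by
    convert measure_empty (μ := μ)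
    refine eq_empty_of_forall_notMem fun x hx => ?_
    have : (g x).toReal ≤ 1 := toReal_le_of_le_ofReal zero_le_one (by simpa using hg_le x)
    exact lt_irrefl t (hx.trans_le (this.trans (le_of_lt ht)))
  calc ∫⁻ x, g x ∂μ = ∫⁻ x, ENNReal.ofReal (g x).toReal ∂μ := by
        simp only [ofReal_toReal (hg_top _)]
    _ = ∫⁻ t in Ioi (0 : ℝ), μ {x | t < (g x).toReal} :=
        lintegral_eq_lintegral_meas_lt μ (ae_of_all _ fun _ => toReal_nonneg)
          hg.ennreal_toReal.aemeasurable
    _ = ∫⁻ t in Ioc (0 : ℝ) 1, μ {x | t < (g x).toReal} := by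
        rw [← Ioc_union_Ioi_eq_Ioi zero_le_one,
          lintegral_union measurableSet_Ioi (Ioc_disjoint_Ioi le_rfl),
          setLIntegral_congr_fun measurableSet_Ioi h_empty, lintegral_zero, add_zero]

lemma lintegral_le_add_mul_lintegral_of_forall_measure_le {μ ν : Measure α} {d c : ℝ≥0∞}
    (h : ∀ s, MeasurableSet s → ν s ≤ d + c * μ s) (hg : Measurable g) (hg_le : ∀ x, g x ≤ 1) :
    ∫⁻ x, g x ∂ν ≤ d + c * ∫⁻ x, g x ∂μ := by
  have h_meas : ∀ t : ℝ, MeasurableSet {x | t < (g x).toReal} :=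
    fun t => measurableSet_lt measurable_const hg.ennreal_toReal
  have h_anti : Antitone fun t : ℝ => μ {x | t < (g x).toReal} :=
    fun s t hst => measure_mono fun x hx => lt_of_le_of_lt hst hx
  calc ∫⁻ x, g x ∂ν = ∫⁻ t in Ioc (0 : ℝ) 1, ν {x | t < (g x).toReal} :=
        lintegral_eq_setLIntegral_Ioc_meas_lt ν hg hg_le
    _ ≤ ∫⁻ t in Ioc (0 : ℝ) 1, d + c * μ {x | t < (g x).toReal} :=
        lintegral_mono fun t => h _ (h_meas t)
    _ = d + c * ∫⁻ t in Ioc (0 : ℝ) 1, μ {x | t < (g x).toReal} := by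
        rw [lintegral_add_left measurable_const, setLIntegral_const, Real.volume_Ioc, sub_zero,
          ofReal_one, mul_one, lintegral_const_mul c h_anti.measurable]
    _ = d + c * ∫⁻ x, g x ∂μ := by rw [lintegral_eq_setLIntegral_Ioc_meas_lt μ hg hg_le]

end LayerCake

section PrivCurve

variable {X : Type*} [MeasurableSpace X] (P Q : Measure X) (ε : ℝ)

lemma privCurve_bddAbove [IsFiniteMeasure Q] :
    BddAbove (range fun A : {A : Set X // MeasurableSet A} =>
      (Q A.1).toReal - Real.exp ε * (P A.1).toReal) := by
  refine ⟨(Q univ).toReal, ?_⟩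
  rintro _ ⟨A, rfl⟩
  have := mul_nonneg (Real.exp_nonneg ε) (P A.1).toReal_nonneg
  linarith [toReal_mono (measure_ne_top Q univ) (measure_mono (subset_univ A.1))]

lemma privCurve_nonneg [IsFiniteMeasure Q] : 0 ≤ privCurve P Q ε := by
  simpa [privCurve] using le_ciSup (privCurve_bddAbove P Q ε) ⟨∅, MeasurableSet.empty⟩

lemma measure_le_ofReal_privCurve_add [IsFiniteMeasure P] [IsFiniteMeasure Q] {A : Set X}
    (hA : MeasurableSet A) :
    Q A ≤ ENNReal.ofReal (privCurve P Q ε) + ENNReal.ofReal (Real.exp ε) * P A := by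
  have h : (Q A).toReal - Real.exp ε * (P A).toReal ≤ privCurve P Q ε :=
    le_ciSup (privCurve_bddAbove P Q ε) ⟨A, hA⟩
  rw [← ofReal_toReal (measure_ne_top P A), ← ofReal_mul (Real.exp_nonneg ε),
    ← ofReal_add (privCurve_nonneg P Q ε) (by positivity), ← ofReal_toReal (measure_ne_top Q A)]
  exact ofReal_le_ofReal (by linarith)

lemma privCurve_le_of_forall_measure_le [IsFiniteMeasure P] {δ : ℝ} (hδ : 0 ≤ δ)
    (h : ∀ A, MeasurableSet A → Q A ≤ ENNReal.ofReal δ + ENNReal.ofReal (Real.exp ε) * P A) :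
    privCurve P Q ε ≤ δ := by
  refine ciSup_le fun A => ?_
  have := toReal_mono (by finiteness) (h A.1 A.2)
  rw [toReal_add (by simp) (by finiteness), toReal_mul, toReal_ofReal hδ,
    toReal_ofReal (Real.exp_nonneg ε)] at this
  linarith

theorem privCurve_bind_le {X' : Type*} [MeasurableSpace X'] [IsFiniteMeasure P]
    [IsFiniteMeasure Q] (L : Kernel X X') [IsMarkovKernel L] :
    privCurve (P.bind L) (Q.bind L) ε ≤ privCurve P Q ε := by
  refine privCurve_le_of_forall_measure_le _ _ ε (privCurve_nonneg P Q ε) fun A hA => ?_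
  rw [Measure.bind_apply hA L.aemeasurable, Measure.bind_apply hA L.aemeasurable]
  exact lintegral_le_add_mul_lintegral_of_forall_measure_le
    (fun _ => measure_le_ofReal_privCurve_add P Q ε) (L.measurable_coe hA) fun _ => prob_le_one

end PrivCurve

theorem privacy_curve_blackwell_equivalence_general
    {X X' : Type*} [MeasurableSpace X] [MeasurableSpace X']
    (P Q : Measure X) (P' Q' : Measure X')
    [IsProbabilityMeasure P] [IsProbabilityMeasure Q]
    [IsProbabilityMeasure P'] [IsProbabilityMeasure Q']
    (K : Kernel X X') [IsMarkovKernel K]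
    (L : Kernel X' X) [IsMarkovKernel L]
    (hPK : P.bind K = P') (hQK : Q.bind K = Q')
    (hPL : P'.bind L = P) (hQL : Q'.bind L = Q)
    (ε : ℝ) :
    privCurve P Q ε = privCurve P' Q' ε := by
  apply le_antisymm
  · simpa only [hPL, hQL] using privCurve_bind_le P' Q' ε L
  · simpa only [hPK, hQK] using privCurve_bind_le P Q ε K

/-- Blackwell-equivalent experiments have identical privacy curves: if there are Markov
kernels `K : X → X'` and `L : X' → X` with `PK = P'`, `QK = Q'`, `P'L = P`, `Q'L = Q`,
then `δ_{Q‖P}(ε) = δ_{Q'‖P'}(ε)` for every `ε ≥ 0`. -/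
theorem privacy_curve_blackwell_equivalence
    {X X' : Type*} [MeasurableSpace X] [MeasurableSpace X']
    (P Q : Measure X) (P' Q' : Measure X')
    [IsProbabilityMeasure P] [IsProbabilityMeasure Q]
    [IsProbabilityMeasure P'] [IsProbabilityMeasure Q']
    (K : Kernel X X') [IsMarkovKernel K]
    (L : Kernel X' X) [IsMarkovKernel L]
    (hPK : P.bind K = P') (hQK : Q.bind K = Q')
    (hPL : P'.bind L = P) (hQL : Q'.bind L = Q)
    (ε : ℝ) (hε : 0 ≤ ε) :
    privCurve P Q ε = privCurve P' Q' ε :=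
  privacy_curve_blackwell_equivalence_general P Q P' Q' K L hPK hQK hPL hQL ε
end

section
/- Let 𝒴 = {a, b, c} and define probability vectors W₀, W₁ on 𝒴 by W₀(a) = W₀(b) = 1/2, W₀(c) = 0, and W₁(b) = W₁(c) = 1/2, W₁(a) = 0. For n ≥ 1 let P_n := T_{n,0} be the law of the histogram of n i.i.d. draws from W₀, and let Q_n := T_{n,1} be the law of the histogram of n−1 i.i.d. draws from W₀ plus one independent draw from W₁. Then for every n ≥ 1 and every ε ≥ 0, δ_{Q_n‖P_n}(ε) ≥ 1/2. (Indeed, the event {histogram has N(c) > 0} has probability 1/2 under Q_n and probability 0 under P_n.) -/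
open MeasureTheory

/-- The discrete measure on a finite type with weight vector `w`. -/
noncomputable def discMeasure {D : Type*} [Fintype D] [MeasurableSpace D] (w : D → ℝ) :
    Measure D :=
  ∑ y, (ENNReal.ofReal (w y)) • Measure.dirac y

/-- The alphabet `𝒴 = {a,b,c}`, encoded as `Fin 3` with `a = 0`, `b = 1`, `c = 2`. -/
abbrev Alphabet : Type := Fin 3

/-- `W₀(a) = W₀(b) = 1/2`, `W₀(c) = 0`. -/
noncomputable def W₀ : Alphabet → ℝ := ![1/2, 1/2, 0]

/-- `W₁(a) = 0`, `W₁(b) = W₁(c) = 1/2`. -/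
noncomputable def W₁ : Alphabet → ℝ := ![0, 1/2, 1/2]

/-- `P_n = T_{n,0}`: the law on `ℕ^𝒴` of the histogram of `n` i.i.d. draws from `W₀`. -/
noncomputable def Pmeas (n : ℕ) : Measure (Alphabet → ℕ) :=
  Measure.map (fun ω : Fin n → Alphabet => ∑ i, Pi.single (ω i) 1)
    (Measure.pi fun _ : Fin n => discMeasure W₀)

/-- `Q_n = T_{n,1}`: the law on `ℕ^𝒴` of the histogram of `n−1` i.i.d. draws from
`W₀` together with one independent draw from `W₁`. -/
noncomputable def Qmeas (n : ℕ) : Measure (Alphabet → ℕ) :=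
  Measure.map
    (fun ω : (Fin (n - 1) → Alphabet) × Alphabet =>
      (∑ i, Pi.single (ω.1 i) 1) + Pi.single ω.2 1)
    ((Measure.pi fun _ : Fin (n - 1) => discMeasure W₀).prod (discMeasure W₁))
/-! Since `W₀` gives no mass to `c`, almost surely none of the `W₀`-draws is `c`. Hence
`N(c) > 0` is `P_n`-null, and under `Q_n` it coincides almost surely with the event that
the single `W₁`-draw is `c`. Testing the supremum defining `δ` on this event gives
`1/2 - e^ε · 0`. -/

open Finset in
lemma histogram_apply {ι α : Type*} [Fintype ι] [DecidableEq α] (ω : ι → α) (a : α) :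
    (∑ i, Pi.single (ω i) 1 : α → ℕ) a = #{i | ω i = a} := by
  simp [Finset.sum_apply, Pi.single_apply, eq_comm]

lemma histogram_pos_iff {ι α : Type*} [Fintype ι] [DecidableEq α] (ω : ι → α) (a : α) :
    0 < (∑ i, Pi.single (ω i) 1 : α → ℕ) a ↔ ∃ i, ω i = a := by
  rw [histogram_apply, Finset.card_pos, Finset.filter_nonempty_iff]
  simp

section discMeasure

variable {D : Type*} [Fintype D] [MeasurableSpace D]

lemma discMeasure_singleton [MeasurableSingletonClass D] (w : D → ℝ) (y : D) :
    discMeasure w {y} = ENNReal.ofReal (w y) := by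
  classical
  simp [discMeasure, Measure.finsetSum_apply, Set.indicator_apply]

lemma isProbabilityMeasure_discMeasure {w : D → ℝ} (hw : 0 ≤ w) (hsum : ∑ y, w y = 1) :
    IsProbabilityMeasure (discMeasure w) := by
  constructor
  simp [discMeasure, Measure.finsetSum_apply,
    ← ENNReal.ofReal_sum_of_nonneg fun y _ => hw y, hsum]

end discMeasure

lemma le_privCurve {X : Type*} [MeasurableSpace X] (P Q : Measure X) [IsFiniteMeasure Q]
    (ε : ℝ) {A : Set X} (hA : MeasurableSet A) :
    (Q A).toReal - Real.exp ε * (P A).toReal ≤ privCurve P Q ε := by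
  refine le_ciSup (f := fun A : {A : Set X // MeasurableSet A} =>
    (Q A.1).toReal - Real.exp ε * (P A.1).toReal) ⟨Q.real Set.univ, ?_⟩ ⟨A, hA⟩
  rintro _ ⟨B, rfl⟩
  have hQ := measureReal_mono (μ := Q) (Set.subset_univ B.1)
  have hP : 0 ≤ Real.exp ε * (P B.1).toReal := by positivity
  simp only [Measure.real] at hQ ⊢
  linarith

lemma pi_exists_eq_null {ι D : Type*} [Fintype ι] [MeasurableSpace D] (μ : Measure D)
    [SigmaFinite μ] {y : D} (hy : μ {y} = 0) :
    Measure.pi (fun _ : ι => μ) {ω | ∃ i, ω i = y} = 0 := by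
  have : {ω : ι → D | ∃ i, ω i = y} = ⋃ i, Function.eval i ⁻¹' {y} := by
    ext; simp
  rw [this]
  exact measure_iUnion_null fun i => Measure.pi_eval_preimage_null _ hy

instance isProbabilityMeasure_discMeasure_W₀ : IsProbabilityMeasure (discMeasure W₀) :=
  isProbabilityMeasure_discMeasure (fun y => by fin_cases y <;> simp [W₀])
    (by norm_num [W₀, Fin.sum_univ_three, Matrix.cons_val_two])

instance isProbabilityMeasure_discMeasure_W₁ : IsProbabilityMeasure (discMeasure W₁) :=
  isProbabilityMeasure_discMeasure (fun y => by fin_cases y <;> simp [W₁])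
    (by norm_num [W₁, Fin.sum_univ_three, Matrix.cons_val_two])

lemma discMeasure_W₀_two : discMeasure W₀ {2} = 0 := by
  simp [discMeasure_singleton, W₀, Matrix.cons_val_two]

lemma discMeasure_W₁_two : discMeasure W₁ {2} = 1 / 2 := by
  simp [discMeasure_singleton, W₁, Matrix.cons_val_two]

lemma measurableSet_count_two_pos : MeasurableSet {h : Alphabet → ℕ | 0 < h 2} :=
  measurableSet_lt measurable_const (measurable_pi_apply 2)

lemma Pmeas_count_two_pos (n : ℕ) : Pmeas n {h | 0 < h 2} = 0 := by
  rw [Pmeas, Measure.map_apply (measurable_of_countable _) measurableSet_count_two_pos]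
  simp only [Set.preimage_ofPred_eq, histogram_pos_iff]
  exact pi_exists_eq_null _ discMeasure_W₀_two

lemma Qmeas_count_two_pos (n : ℕ) : Qmeas n {h | 0 < h 2} = 1 / 2 := by
  rw [Qmeas, Measure.map_apply (measurable_of_countable _) measurableSet_count_two_pos]
  have hpre : (fun ω : (Fin (n - 1) → Alphabet) × Alphabet =>
        (∑ i, Pi.single (ω.1 i) 1) + Pi.single ω.2 1) ⁻¹' {h : Alphabet → ℕ | 0 < h 2} =
      Prod.fst ⁻¹' {ω | ∃ i, ω i = 2} ∪ Prod.snd ⁻¹' {2} := by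
    ext ⟨ω, y⟩
    simp [← histogram_pos_iff, Pi.single_apply, eq_comm, apply_ite (0 < ·)]
  have hfst_null : ((Measure.pi fun _ : Fin (n - 1) => discMeasure W₀).prod (discMeasure W₁))
      (Prod.fst ⁻¹' {ω | ∃ i, ω i = 2}) = 0 :=
    Measure.quasiMeasurePreserving_fst.preimage_null (pi_exists_eq_null _ discMeasure_W₀_two)
  rw [hpre,
    measure_congr (union_ae_eq_right_of_ae_eq_empty (ae_eq_empty.2 hfst_null)),
    ← Measure.snd_apply (measurableSet_singleton _), Measure.snd_prod, discMeasure_W₁_two]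

instance isProbabilityMeasure_Qmeas (n : ℕ) : IsProbabilityMeasure (Qmeas n) :=
  Measure.isProbabilityMeasure_map (measurable_of_countable _).aemeasurable

theorem strong_boundary_obstruction_general (n : ℕ) (ε : ℝ) :
    Qmeas n {h | 0 < h 2} = 1 / 2 ∧
    Pmeas n {h | 0 < h 2} = 0 ∧
    1 / 2 ≤ privCurve (Pmeas n) (Qmeas n) ε := by
  refine ⟨Qmeas_count_two_pos n, Pmeas_count_two_pos n, ?_⟩
  calc (1 / 2 : ℝ)
      = (Qmeas n {h | 0 < h 2}).toReal - Real.exp ε * (Pmeas n {h | 0 < h 2}).toReal := by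
        rw [Qmeas_count_two_pos, Pmeas_count_two_pos]; norm_num
    _ ≤ privCurve (Pmeas n) (Qmeas n) ε := le_privCurve _ _ ε measurableSet_count_two_pos

/-- Strong-boundary obstruction (Proposition 6.1, explicit example): for the
overlapping two-dominant array `W₀ = (1/2,1/2,0)`, `W₁ = (0,1/2,1/2)` with `k_n ≡ 0`,
the event `{N(c) > 0}` has probability `1/2` under `Q_n` and `0` under `P_n`, so
`δ_{Q_n‖P_n}(ε) ≥ 1/2` for every `n ≥ 1` and every `ε ≥ 0`. -/
theorem strong_boundary_obstruction (n : ℕ) (hn : 1 ≤ n) (ε : ℝ) (hε : 0 ≤ ε) :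
    Qmeas n {h | 0 < h 2} = 1 / 2 ∧
    Pmeas n {h | 0 < h 2} = 0 ∧
    1 / 2 ≤ privCurve (Pmeas n) (Qmeas n) ε :=
  strong_boundary_obstruction_general n ε
end
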